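/- arXiv:2508.12915 — 5 statements merged into one kernel-verified Lean document; each statement's English description precedes it below -/
import Mathlib

section
/- For any real ε with 0 < ε < 1, any integers m > 2 and N ≥ 1, the sum of the multinomial coefficients (N choose k_1, ..., k_m) over all tuples of nonnegative integers (k_1, ..., k_m) with k_1 + ... + k_m = N and k_1 + k_2 < N^ε is at most (m-2)^N · N^{N^ε + 2}. -/
open Finset

lemma aux_sum_multinomial {α : Type*} [DecidableEq α] (s : Finset α) (n : ℕ) :
    ∑ k ∈ s.piAntidiag n, Nat.multinomial s k = s.card ^ n := by
  have h := Finset.sum_pow_eq_sum_piAntidiag s (fun _ => (1 : ℕ)) n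
  simpa using h.symm

lemma aux_fiber_bound (m N : ℕ) (hm : 2 < m) (a b : ℕ) :
    ∑ k ∈ (Finset.Nat.antidiagonalTuple m N).filter
        (fun k => (k ⟨0, by omega⟩, k ⟨1, by omega⟩) = (a, b)),
      Nat.multinomial Finset.univ k ≤ N ^ (a + b) * (m - 2) ^ N := by
  set i0 : Fin m := ⟨0, by omega⟩ with hi0
  set i1 : Fin m := ⟨1, by omega⟩ with hi1
  have hne : i0 ≠ i1 := by simp [hi0, hi1, Fin.ext_iff]
  set t : Finset (Fin m) := univ \ {i0, i1} with ht
  have hi0t : i0 ∉ t := by simp [ht]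
  have hi1t : i1 ∉ t := by simp [ht]
  have hi0m : i0 ∉ insert i1 t := by simp [ht, hne]
  have hcard : t.card = m - 2 := by
    rw [ht, card_sdiff_of_subset (by simp)]
    simp [card_pair hne]
  have huniv : (univ : Finset (Fin m)) = insert i0 (insert i1 t) := by
    ext i
    by_cases h0 : i = i0 <;> by_cases h1 : i = i1 <;> simp [ht, h0, h1]
  set S := (Finset.Nat.antidiagonalTuple m N).filter
      (fun k => (k i0, k i1) = (a, b)) with hS
  -- pointwise bound
  have step1 : ∀ k ∈ S, Nat.multinomial univ k ≤ N ^ (a + b) * Nat.multinomial t k := by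
    intro k hk
    rw [hS, mem_filter, Finset.Nat.mem_antidiagonalTuple, Prod.mk.injEq] at hk
    obtain ⟨hsum, ha, hb⟩ := hk
    have hsum' : k i0 + (k i1 + ∑ i ∈ t, k i) = N := by
      rw [← hsum, huniv, sum_insert hi0m, sum_insert hi1t]
    rw [huniv, Nat.multinomial_insert hi0m, Nat.multinomial_insert hi1t, sum_insert hi1t]
    calc (k i0 + (k i1 + ∑ i ∈ t, k i)).choose (k i0) *
          ((k i1 + ∑ i ∈ t, k i).choose (k i1) * Nat.multinomial t k)
        ≤ N ^ a * (N ^ b * Nat.multinomial t k) := by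
          refine Nat.mul_le_mul ?_ (Nat.mul_le_mul ?_ le_rfl)
          · rw [hsum', ha]; exact Nat.choose_le_pow _ _
          · calc (k i1 + ∑ i ∈ t, k i).choose (k i1) ≤ (k i1 + ∑ i ∈ t, k i) ^ (k i1) :=
                Nat.choose_le_pow _ _
              _ ≤ N ^ b := by
                rw [hb]
                exact Nat.pow_le_pow_left (by omega) _
      _ = N ^ (a + b) * Nat.multinomial t k := by ring
  calc ∑ k ∈ S, Nat.multinomial univ k
      ≤ ∑ k ∈ S, N ^ (a + b) * Nat.multinomial t k := Finset.sum_le_sum step1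
    _ = N ^ (a + b) * ∑ k ∈ S, Nat.multinomial t k := by rw [mul_sum]
    _ ≤ N ^ (a + b) * (m - 2) ^ N := by
        refine Nat.mul_le_mul le_rfl ?_
        -- inject into piAntidiag t (N - a - b)
        set φ : (Fin m → ℕ) → (Fin m → ℕ) := fun k i => if i = i0 ∨ i = i1 then 0 else k i with hφ
        have hinj : ∀ x ∈ S, ∀ y ∈ S, φ x = φ y → x = y := by
          intro x hx y hy hxy
          rw [hS, mem_filter, Prod.mk.injEq] at hx hy
          funext i
          by_cases h0 : i = i0
          · rw [h0, hx.2.1, hy.2.1]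
          by_cases h1 : i = i1
          · rw [h1, hx.2.2, hy.2.2]
          · have := congrFun hxy i
            simpa [hφ, h0, h1] using this
        have hcongr : ∀ k, Nat.multinomial t (φ k) = Nat.multinomial t k := by
          intro k
          refine Nat.multinomial_congr fun i hi => ?_
          rw [ht, mem_sdiff] at hi
          simp only [mem_insert, mem_singleton] at hi
          simp [hφ, hi.2]
        have himg : S.image φ ⊆ t.piAntidiag (N - a - b) := by
          intro g hg
          rw [mem_image] at hg
          obtain ⟨k, hk, rfl⟩ := hg
          rw [hS, mem_filter, Finset.Nat.mem_antidiagonalTuple, Prod.mk.injEq] at hk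
          obtain ⟨hsum, ha, hb⟩ := hk
          have hsum' : k i0 + (k i1 + ∑ i ∈ t, k i) = N := by
            rw [← hsum, huniv, sum_insert hi0m, sum_insert hi1t]
          rw [mem_piAntidiag]
          constructor
          · have : ∑ i ∈ t, φ k i = ∑ i ∈ t, k i := by
              refine sum_congr rfl fun i hi => ?_
              rw [ht, mem_sdiff] at hi
              simp only [mem_insert, mem_singleton] at hi
              simp [hφ, hi.2]
            rw [this]; omega
          · intro i hi
            rw [ht, mem_sdiff]
            simp only [hφ] at hi
            by_cases h : i = i0 ∨ i = i1
            · simp [h] at hi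
            · push_neg at h
              simp [h.1, h.2]
        calc ∑ k ∈ S, Nat.multinomial t k
            = ∑ g ∈ S.image φ, Nat.multinomial t g := by
              rw [sum_image hinj]
              exact (sum_congr rfl fun k _ => hcongr k).symm
          _ ≤ ∑ g ∈ t.piAntidiag (N - a - b), Nat.multinomial t g :=
              sum_le_sum_of_subset himg
          _ = (m - 2) ^ (N - a - b) := by rw [aux_sum_multinomial, hcard]
          _ ≤ (m - 2) ^ N := Nat.pow_le_pow_right (by omega) (by omega)


/-- For `0 < ε < 1`, `m > 2` and `N ≥ 1`, the sum of the multinomial coefficients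
`(N choose k_1, ..., k_m)` over all tuples with `k_1 + ... + k_m = N` and `k_1 + k_2 < N^ε`
is at most `(m-2)^N * N^(N^ε + 2)`. -/
theorem sum_multinomial_small_first_two_le (ε : ℝ) (hε0 : 0 < ε) (hε1 : ε < 1)
    (m N : ℕ) (hm : 2 < m) (hN : 1 ≤ N) :
    (∑ k ∈ (Finset.Nat.antidiagonalTuple m N).filter
        (fun k => ((k ⟨0, by omega⟩ + k ⟨1, by omega⟩ : ℕ) : ℝ) < (N : ℝ) ^ ε),
      (Nat.multinomial Finset.univ k : ℝ)) ≤
      ((m : ℝ) - 2) ^ N * (N : ℝ) ^ ((N : ℝ) ^ ε + 2) := by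
  have hN1 : (1 : ℝ) ≤ (N : ℝ) := by exact_mod_cast hN
  have hN0 : (0 : ℝ) < (N : ℝ) := by positivity
  set i0 : Fin m := ⟨0, by omega⟩ with hi0
  set i1 : Fin m := ⟨1, by omega⟩ with hi1
  set S := (Finset.Nat.antidiagonalTuple m N).filter
      (fun k => ((k i0 + k i1 : ℕ) : ℝ) < (N : ℝ) ^ ε) with hS
  set T := ((range N) ×ˢ (range N)).filter
      (fun p : ℕ × ℕ => ((p.1 + p.2 : ℕ) : ℝ) < (N : ℝ) ^ ε) with hT
  have hNεN : (N : ℝ) ^ ε ≤ (N : ℝ) := by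
    calc (N : ℝ) ^ ε ≤ (N : ℝ) ^ (1 : ℝ) :=
      Real.rpow_le_rpow_of_exponent_le hN1 hε1.le
    _ = (N : ℝ) := Real.rpow_one _
  have hmaps : ∀ k ∈ S, (k i0, k i1) ∈ T := by
    intro k hk
    rw [hS, mem_filter, Finset.Nat.mem_antidiagonalTuple] at hk
    obtain ⟨hsum, hlt⟩ := hk
    have h1 : ((k i0 + k i1 : ℕ) : ℝ) < (N : ℝ) := lt_of_lt_of_le hlt hNεN
    have h2 : k i0 + k i1 < N := by exact_mod_cast h1
    rw [hT, mem_filter, mem_product, mem_range, mem_range]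
    exact ⟨⟨by omega, by omega⟩, hlt⟩
  rw [← Finset.sum_fiberwise_of_maps_to hmaps]
  have hbound : ∀ p ∈ T, (∑ k ∈ S.filter (fun k => (k i0, k i1) = p),
      (Nat.multinomial Finset.univ k : ℝ)) ≤ (N : ℝ) ^ ((N : ℝ) ^ ε) * ((m - 2 : ℕ) : ℝ) ^ N := by
    intro p hp
    rw [hT, mem_filter] at hp
    obtain ⟨-, hplt⟩ := hp
    calc (∑ k ∈ S.filter (fun k => (k i0, k i1) = p), (Nat.multinomial Finset.univ k : ℝ))
        ≤ ∑ k ∈ (Finset.Nat.antidiagonalTuple m N).filter (fun k => (k i0, k i1) = p),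
            (Nat.multinomial Finset.univ k : ℝ) := by
          refine sum_le_sum_of_subset_of_nonneg ?_ (fun _ _ _ => by positivity)
          intro k hk
          rw [mem_filter] at hk ⊢
          rw [hS, mem_filter] at hk
          exact ⟨hk.1.1, hk.2⟩
      _ = ((∑ k ∈ (Finset.Nat.antidiagonalTuple m N).filter (fun k => (k i0, k i1) = p),
            Nat.multinomial Finset.univ k : ℕ) : ℝ) := by push_cast; rfl
      _ ≤ ((N ^ (p.1 + p.2) * (m - 2) ^ N : ℕ) : ℝ) := by
          exact_mod_cast aux_fiber_bound m N hm p.1 p.2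
      _ = (N : ℝ) ^ (p.1 + p.2 : ℕ) * ((m - 2 : ℕ) : ℝ) ^ N := by push_cast; ring
      _ ≤ (N : ℝ) ^ ((N : ℝ) ^ ε) * ((m - 2 : ℕ) : ℝ) ^ N := by
          refine mul_le_mul_of_nonneg_right ?_ (by positivity)
          rw [← Real.rpow_natCast (N : ℝ) (p.1 + p.2)]
          exact Real.rpow_le_rpow_of_exponent_le hN1 (by exact_mod_cast hplt.le)
  calc (∑ p ∈ T, ∑ k ∈ S.filter (fun k => (k i0, k i1) = p),
        (Nat.multinomial Finset.univ k : ℝ))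
      ≤ ∑ p ∈ T, (N : ℝ) ^ ((N : ℝ) ^ ε) * ((m - 2 : ℕ) : ℝ) ^ N := sum_le_sum hbound
    _ = T.card * ((N : ℝ) ^ ((N : ℝ) ^ ε) * ((m - 2 : ℕ) : ℝ) ^ N) := by
        rw [sum_const, nsmul_eq_mul]
    _ ≤ (N : ℝ) ^ 2 * ((N : ℝ) ^ ((N : ℝ) ^ ε) * ((m - 2 : ℕ) : ℝ) ^ N) := by
        refine mul_le_mul_of_nonneg_right ?_ (by positivity)
        have : T.card ≤ N * N := by
          calc T.card ≤ ((range N) ×ˢ (range N)).card := card_filter_le _ _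
            _ = N * N := by simp
        calc (T.card : ℝ) ≤ ((N * N : ℕ) : ℝ) := by exact_mod_cast this
          _ = (N : ℝ) ^ 2 := by push_cast; ring
    _ = ((m : ℝ) - 2) ^ N * (N : ℝ) ^ ((N : ℝ) ^ ε + 2) := by
        have hcast : ((m - 2 : ℕ) : ℝ) = (m : ℝ) - 2 := by
          have : (2 : ℕ) ≤ m := by omega
          push_cast [this]; ring
        rw [hcast, Real.rpow_add hN0, Real.rpow_two]
        ring
end

section
/- Fix ε ∈ (0,1) and δ ∈ (0, ε/10). For N sufficiently large, for any integer k ≥ N^ε and any integer ℓ with 0 ≤ ℓ ≤ √k/2, setting a = ⌈k/2⌉ + ℓ·⌈N^δ⌉ and b = a + ⌈N^δ⌉ (assuming b ≤ k), the ratio α = (a! · (k−a)!) / (b! · (k−b)!) satisfies |α − 1| = O(N^{−3ε/10}), where the implied constant is independent of k, ℓ, and N. -/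
/-- Monotonicity of `a! * (k-a)!` as `a` moves away from `k/2` (upper half). -/
lemma aux_fact_mono : ∀ (m a k : ℕ), k ≤ 2 * a → a + m ≤ k →
    Nat.factorial a * Nat.factorial (k - a) ≤
      Nat.factorial (a + m) * Nat.factorial (k - (a + m)) := by
  intro m
  induction m with
  | zero => intro a k _ _; simp
  | succ n ih =>
    intro a k h1 h2
    have h3 := ih a k h1 (by omega)
    refine h3.trans ?_
    have hk : k - (a + n) = (k - (a + n + 1)) + 1 := by omega
    rw [hk, Nat.factorial_succ]
    have hle : k - (a + n + 1) + 1 ≤ a + n + 1 := by omega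
    calc Nat.factorial (a + n) * ((k - (a + n + 1) + 1) * Nat.factorial (k - (a + n + 1)))
        ≤ Nat.factorial (a + n) * ((a + n + 1) * Nat.factorial (k - (a + n + 1))) := by
          exact Nat.mul_le_mul_left _ (Nat.mul_le_mul_right _ hle)
      _ = Nat.factorial (a + n + 1) * Nat.factorial (k - (a + n + 1)) := by
          rw [Nat.factorial_succ]; ring

/-- `(a+m)! ≤ a! * (a+m)^m`. -/
lemma aux_fact_upper : ∀ (m a : ℕ), Nat.factorial (a + m) ≤ Nat.factorial a * (a + m) ^ m := by
  intro m
  induction m with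
  | zero => intro a; simp
  | succ n ih =>
    intro a
    have h1 : Nat.factorial (a + (n + 1)) = (a + n + 1) * Nat.factorial (a + n) := by
      rw [show a + (n + 1) = (a + n) + 1 by ring, Nat.factorial_succ]
    rw [h1]
    calc (a + n + 1) * Nat.factorial (a + n)
        ≤ (a + n + 1) * (Nat.factorial a * (a + n) ^ n) := Nat.mul_le_mul_left _ (ih a)
      _ ≤ (a + n + 1) * (Nat.factorial a * (a + n + 1) ^ n) := by
          exact Nat.mul_le_mul_left _ (Nat.mul_le_mul_left _ (Nat.pow_le_pow_left (by omega) n))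
      _ = Nat.factorial a * (a + n + 1) ^ (n + 1) := by ring
      _ = Nat.factorial a * (a + (n + 1)) ^ (n + 1) := by ring_nf

/-- Key inequality: `(k-b+1)^m * (b! * (k-b)!) ≤ b^m * (a! * (k-a)!)` when `b = a + m ≤ k`. -/
lemma aux_key (m a k : ℕ) (hb : a + m ≤ k) :
    (k - (a + m) + 1) ^ m * (Nat.factorial (a + m) * Nat.factorial (k - (a + m))) ≤
      (a + m) ^ m * (Nat.factorial a * Nat.factorial (k - a)) := by
  set b := a + m with hbdef
  have h1 : Nat.factorial b ≤ Nat.factorial a * b ^ m := aux_fact_upper m a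
  have h2 : Nat.factorial (k - b) * (k - b + 1) ^ m ≤ Nat.factorial (k - a) := by
    have : k - a = (k - b) + m := by omega
    rw [this]
    exact Nat.factorial_mul_pow_le_factorial
  calc (k - b + 1) ^ m * (Nat.factorial b * Nat.factorial (k - b))
      ≤ (k - b + 1) ^ m * ((Nat.factorial a * b ^ m) * Nat.factorial (k - b)) := by
        exact Nat.mul_le_mul_left _ (Nat.mul_le_mul_right _ h1)
    _ = b ^ m * (Nat.factorial a * (Nat.factorial (k - b) * (k - b + 1) ^ m)) := by ring
    _ ≤ b ^ m * (Nat.factorial a * Nat.factorial (k - a)) := by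
        exact Nat.mul_le_mul_left _ (Nat.mul_le_mul_left _ h2)

set_option maxHeartbeats 1000000 in
/-- Fix `ε ∈ (0,1)` and `δ ∈ (0, ε/10)`. For `N` large, for any `k ≥ N^ε` and integer
`0 ≤ ℓ ≤ √k/2`, with `a = ⌈k/2⌉ + ℓ·⌈N^δ⌉` and `b = a + ⌈N^δ⌉ ≤ k`, the ratio
`α = (a!·(k−a)!)/(b!·(k−b)!)` satisfies `|α − 1| = O(N^(−3ε/10))` uniformly in `k, ℓ`. -/
theorem factorial_ratio_near_one (ε δ : ℝ) (hε0 : 0 < ε) (hε1 : ε < 1)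
    (hδ0 : 0 < δ) (hδ : δ < ε / 10) :
    ∃ C > 0, ∃ N₀ : ℕ, ∀ N ≥ N₀, ∀ k ℓ : ℕ,
      (N : ℝ) ^ ε ≤ (k : ℝ) → (ℓ : ℝ) ≤ Real.sqrt k / 2 →
      ∀ a b : ℕ, a = ⌈(k : ℝ) / 2⌉₊ + ℓ * ⌈(N : ℝ) ^ δ⌉₊ → b = a + ⌈(N : ℝ) ^ δ⌉₊ →
      b ≤ k →
      |((Nat.factorial a : ℝ) * Nat.factorial (k - a)) /
          ((Nat.factorial b : ℝ) * Nat.factorial (k - b)) - 1| ≤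
        C * (N : ℝ) ^ (-(3 * ε) / 10) := by
  refine ⟨32, by norm_num, 1, ?_⟩
  intro N hN k ℓ hk hℓ a b ha hb hbk
  have hN1 : (1 : ℝ) ≤ (N : ℝ) := by exact_mod_cast hN
  have hN0 : (0 : ℝ) < (N : ℝ) := by linarith
  set m : ℕ := ⌈(N : ℝ) ^ δ⌉₊ with hm
  have hNδ1 : (1 : ℝ) ≤ (N : ℝ) ^ δ := Real.one_le_rpow hN1 hδ0.le
  have hm1 : 1 ≤ m := by
    rw [hm]; exact Nat.one_le_ceil_iff.mpr (by linarith)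
  have hmR : (m : ℝ) ≤ 2 * (N : ℝ) ^ δ := by
    have := Nat.ceil_lt_add_one (by positivity : (0:ℝ) ≤ (N : ℝ) ^ δ)
    rw [hm]; push_cast; linarith
  have hk1R : (1 : ℝ) ≤ (k : ℝ) := le_trans (Real.one_le_rpow hN1 hε0.le) hk
  have hk0R : (0 : ℝ) < (k : ℝ) := by linarith
  -- a is at least ⌈k/2⌉
  have hceil_lb : (k : ℝ) / 2 ≤ (⌈(k : ℝ) / 2⌉₊ : ℕ) := Nat.le_ceil _
  have hceil_ub : (⌈(k : ℝ) / 2⌉₊ : ℝ) ≤ (k : ℝ) / 2 + 1 :=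
    le_of_lt (Nat.ceil_lt_add_one (by positivity))
  have haR : (k : ℝ) / 2 ≤ (a : ℝ) := by
    rw [ha]; push_cast; nlinarith [Nat.le_ceil ((k : ℝ) / 2), (by positivity : (0:ℝ) ≤ (ℓ:ℝ) * m)]
  have hk2a : k ≤ 2 * a := by
    have : (k : ℝ) ≤ 2 * (a : ℝ) := by linarith
    exact_mod_cast this
  have hbam : b = a + m := hb
  -- b ≥ k/2, b > 0
  have hbR : (k : ℝ) / 2 ≤ (b : ℝ) := by
    have : (a : ℝ) ≤ (b : ℝ) := by rw [hbam]; push_cast; linarith [Nat.cast_nonneg (α := ℝ) m]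
    linarith
  have hb0 : (0 : ℝ) < (b : ℝ) := by linarith
  -- √k facts
  set s : ℝ := Real.sqrt k with hs
  have hs0 : (0 : ℝ) < s := Real.sqrt_pos.mpr hk0R
  have hs1 : (1 : ℝ) ≤ s := by
    rw [hs, show (1:ℝ) = Real.sqrt 1 by simp]; exact Real.sqrt_le_sqrt hk1R
  have hss : s * s = (k : ℝ) := Real.mul_self_sqrt hk0R.le
  -- bound on 2b - k - 1
  have h2b : 2 * (b : ℝ) - (k : ℝ) - 1 ≤ 4 * s * (m : ℝ) := by
    have hbval : (b : ℝ) = (⌈(k : ℝ) / 2⌉₊ : ℝ) + ((ℓ : ℝ) + 1) * (m : ℝ) := by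
      rw [hbam, ha]; push_cast; ring
    have hm1R : (1 : ℝ) ≤ (m : ℝ) := by exact_mod_cast hm1
    nlinarith [hceil_ub, hℓ, hs1, hm1R]
  have h2bnn : (0 : ℝ) ≤ 2 * (b : ℝ) - (k : ℝ) - 1 := by
    have hm1R : (1 : ℝ) ≤ (m : ℝ) := by exact_mod_cast hm1
    have haR2 : (k : ℝ) ≤ 2 * (a : ℝ) := by linarith
    have : (b : ℝ) = (a : ℝ) + (m : ℝ) := by rw [hbam]; push_cast; ring
    linarith
  -- α and its bounds
  set A : ℝ := (Nat.factorial a : ℝ) * Nat.factorial (k - a) with hA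
  set B : ℝ := (Nat.factorial b : ℝ) * Nat.factorial (k - b) with hB
  have hApos : 0 < A := by positivity
  have hBpos : 0 < B := by positivity
  have hAB : A ≤ B := by
    have := aux_fact_mono m a k hk2a (hbam ▸ hbk)
    rw [hA, hB, hbam]; exact_mod_cast this
  have hα1 : A / B ≤ 1 := (div_le_one hBpos).mpr hAB
  -- lower bound: ((k-b+1)/b)^m ≤ A/B
  have hkey := aux_key m a k (hbam ▸ hbk)
  have hlow : (((k : ℝ) - b + 1) / b) ^ m ≤ A / B := by
    have hcast : ((k - b + 1 : ℕ) : ℝ) = (k : ℝ) - b + 1 := by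
      push_cast [Nat.cast_sub hbk]; ring
    have hkeyR : ((k : ℝ) - b + 1) ^ m * B ≤ (b : ℝ) ^ m * A := by
      have := hkey
      rw [← hbam] at this
      have : (((k - b + 1) ^ m * (Nat.factorial b * Nat.factorial (k - b)) : ℕ) : ℝ) ≤
          (((b) ^ m * (Nat.factorial a * Nat.factorial (k - a)) : ℕ) : ℝ) := by exact_mod_cast this
      push_cast at this
      rw [Nat.cast_sub hbk] at this
      rw [hA, hB]; linarith [this]
    rw [div_pow, div_le_div_iff₀ (by positivity) hBpos]
    calc ((k : ℝ) - b + 1) ^ m * B ≤ (b : ℝ) ^ m * A := hkeyR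
      _ = A * (b : ℝ) ^ m := by ring
  -- Bernoulli: 1 - x^m ≤ m(1-x)
  have hbern : 1 + (m : ℝ) * (((k : ℝ) - b + 1) / b - 1) ≤ (((k : ℝ) - b + 1) / b) ^ m := by
    have hx : (0 : ℝ) ≤ ((k : ℝ) - b + 1) / b := by
      apply div_nonneg _ hb0.le
      have : (b : ℝ) ≤ (k : ℝ) := by exact_mod_cast hbk
      linarith
    have := one_add_mul_le_pow (a := ((k : ℝ) - b + 1) / b - 1) (by linarith) m
    simpa using this
  have hdiff : |A / B - 1| ≤ (m : ℝ) * ((2 * b - k - 1) / b) := by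
    rw [abs_sub_comm, abs_of_nonneg (by linarith)]
    have e1 : (m : ℝ) * (((k : ℝ) - b + 1) / b - 1) = -((m : ℝ) * ((2 * b - k - 1) / b)) := by
      field_simp; ring
    linarith [hlow, hbern, e1]
  -- now the numeric chain
  have hm1R : (1 : ℝ) ≤ (m : ℝ) := by exact_mod_cast hm1
  have hstep1 : (m : ℝ) * ((2 * b - k - 1) / b) ≤ (m : ℝ) * (4 * s * m) / ((k:ℝ)/2) := by
    rw [mul_div_assoc]
    apply mul_le_mul_of_nonneg_left _ (by positivity)
    exact div_le_div₀ (by positivity) h2b (by positivity) hbR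
  have hstep2 : (m : ℝ) * (4 * s * m) / ((k:ℝ)/2) = 8 * (m:ℝ)^2 / s := by
    rw [← hss]; field_simp; ring
  have hsN : (N : ℝ) ^ (ε/2) ≤ s := by
    have h1 : Real.sqrt ((N:ℝ) ^ ε) ≤ s := Real.sqrt_le_sqrt hk
    have h2 : Real.sqrt ((N:ℝ) ^ ε) = (N : ℝ) ^ (ε/2) := by
      rw [Real.sqrt_eq_rpow, ← Real.rpow_mul hN0.le]
      ring_nf
    linarith [h2 ▸ h1]
  have hsNpos : (0:ℝ) < (N : ℝ) ^ (ε/2) := Real.rpow_pos_of_pos hN0 _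
  have hstep3 : 8 * (m:ℝ)^2 / s ≤ 32 * (N:ℝ) ^ (2*δ) / (N:ℝ) ^ (ε/2) := by
    apply div_le_div₀ (by positivity) _ hsNpos hsN
    have hm2 : (m:ℝ)^2 ≤ (2 * (N:ℝ)^δ)^2 := by
      apply pow_le_pow_left₀ (by positivity) hmR
    have : (2 * (N:ℝ)^δ)^2 = 4 * (N:ℝ)^(2*δ) := by
      rw [mul_pow, ← Real.rpow_natCast ((N:ℝ)^δ) 2, ← Real.rpow_mul hN0.le]
      norm_num; ring_nf
    nlinarith [hm2, this]
  have hstep4 : 32 * (N:ℝ) ^ (2*δ) / (N:ℝ) ^ (ε/2) = 32 * (N:ℝ) ^ (2*δ - ε/2) := by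
    rw [Real.rpow_sub hN0]; ring
  have hstep5 : (N:ℝ) ^ (2*δ - ε/2) ≤ (N:ℝ) ^ (-(3*ε)/10) :=
    Real.rpow_le_rpow_of_exponent_le hN1 (by linarith)
  calc |A / B - 1| ≤ (m : ℝ) * ((2 * b - k - 1) / b) := hdiff
    _ ≤ (m : ℝ) * (4 * s * m) / ((k:ℝ)/2) := hstep1
    _ = 8 * (m:ℝ)^2 / s := hstep2
    _ ≤ 32 * (N:ℝ) ^ (2*δ) / (N:ℝ) ^ (ε/2) := hstep3
    _ = 32 * (N:ℝ) ^ (2*δ - ε/2) := hstep4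
    _ ≤ 32 * (N:ℝ) ^ (-(3*ε)/10) := by nlinarith [hstep5, Real.rpow_pos_of_pos hN0 (-(3*ε)/10)]
end

section
/- Fix ε ∈ (0,1) and δ ∈ (0, ε/10). For N sufficiently large, for any integer k ≥ N^ε and any integer ℓ with 0 ≤ ℓ ≤ √k/2, with k_{1,ℓ} = ⌈k/2⌉ + ℓ·⌈N^δ⌉ and k_{1,ℓ+1} = k_{1,ℓ} + ⌈N^δ⌉ (assuming k_{1,ℓ+1} ≤ k), we have |C(k, k_{1,ℓ}) − C(k, k_{1,ℓ+1})| = O(C(k, k_{1,ℓ}) · N^{−3ε/10}), with the implied constant independent of k, ℓ, N. -/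
set_option maxHeartbeats 1000000

lemma choose_anti_step' (k j : ℕ) (h : k ≤ 2*j+1) : k.choose (j+1) ≤ k.choose j := by
  have h1 := Nat.choose_succ_right_eq k j
  have h2 : k.choose j * (k - j) ≤ k.choose j * (j+1) :=
    Nat.mul_le_mul_left _ (by omega)
  exact Nat.le_of_mul_le_mul_right (h1.le.trans h2) (Nat.succ_pos j)

lemma choose_anti' (k a : ℕ) (ha : k ≤ 2*a) : ∀ j, a ≤ j → k.choose j ≤ k.choose a := by
  intro j hj
  induction j with
  | zero =>
    have : a = 0 := Nat.le_zero.mp hj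
    simp [this]
  | succ n ih =>
    rcases Nat.lt_or_ge a (n+1) with h | h
    · have hn : a ≤ n := by omega
      exact (choose_anti_step' k n (by omega)).trans (ih hn)
    · have : a = n+1 := by omega
      simp [this]

/-- Fix `ε ∈ (0,1)` and `δ ∈ (0, ε/10)`. For `N` large, for any `k ≥ N^ε` and integer
`0 ≤ ℓ ≤ √k/2`, with `k₁ℓ = ⌈k/2⌉ + ℓ·⌈N^δ⌉` and `k₁ℓ' = k₁ℓ + ⌈N^δ⌉ ≤ k`, adjacent
binomial coefficients differ by `O(C(k, k₁ℓ) · N^(−3ε/10))`, uniformly in `k, ℓ`. -/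
theorem choose_diff_small (ε δ : ℝ) (hε0 : 0 < ε) (hε1 : ε < 1)
    (hδ0 : 0 < δ) (hδ : δ < ε / 10) :
    ∃ C > 0, ∃ N₀ : ℕ, ∀ N ≥ N₀, ∀ k ℓ : ℕ,
      (N : ℝ) ^ ε ≤ (k : ℝ) → (ℓ : ℝ) ≤ Real.sqrt k / 2 →
      ∀ a b : ℕ, a = ⌈(k : ℝ) / 2⌉₊ + ℓ * ⌈(N : ℝ) ^ δ⌉₊ → b = a + ⌈(N : ℝ) ^ δ⌉₊ →
      b ≤ k →
      |(Nat.choose k a : ℝ) - (Nat.choose k b : ℝ)| ≤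
        C * (Nat.choose k a : ℝ) * (N : ℝ) ^ (-(3 * ε) / 10) := by
  refine ⟨24, by norm_num, max 1 ⌈(4:ℝ)^((1:ℝ)/ε)⌉₊, ?_⟩
  intro N hN k ℓ hk hℓ a b ha hb hbk
  have hN1 : (1:ℕ) ≤ N := le_trans (le_max_left _ _) hN
  have hr1 : (1:ℝ) ≤ (N:ℝ) := by exact_mod_cast hN1
  have hr0 : (0:ℝ) < (N:ℝ) := lt_of_lt_of_le one_pos hr1
  -- N^ε ≥ 4
  have h4 : (4:ℝ) ≤ (N:ℝ)^ε := by
    have h1 : ((⌈(4:ℝ)^((1:ℝ)/ε)⌉₊ : ℕ) : ℝ) ≤ (N:ℝ) := by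
      exact_mod_cast le_trans (le_max_right _ _) hN
    have h2 : (4:ℝ)^((1:ℝ)/ε) ≤ (N:ℝ) := le_trans (Nat.le_ceil _) h1
    calc (4:ℝ) = ((4:ℝ)^((1:ℝ)/ε))^ε := by
          rw [← Real.rpow_mul (by norm_num), one_div, inv_mul_cancel₀ (ne_of_gt hε0),
            Real.rpow_one]
      _ ≤ (N:ℝ)^ε := Real.rpow_le_rpow (Real.rpow_nonneg (by norm_num) _) h2 hε0.le
  have hk4 : (4:ℝ) ≤ (k:ℝ) := h4.trans hk
  have hk4n : 4 ≤ k := by exact_mod_cast hk4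
  have hk0 : (0:ℝ) < (k:ℝ) := by positivity
  set m := ⌈(N:ℝ)^δ⌉₊ with hm
  have hδε : 0 ≤ δ := hδ0.le
  have hNδ1 : (1:ℝ) ≤ (N:ℝ)^δ := by
    have := Real.rpow_le_rpow_of_exponent_le hr1 hδε
    simpa [Real.rpow_zero] using this
  have hM1 : (1:ℝ) ≤ (m:ℝ) := le_trans hNδ1 (Nat.le_ceil _)
  have hM2 : (m:ℝ) ≤ 2*(N:ℝ)^δ := by
    have := Nat.ceil_lt_add_one (le_of_lt (lt_of_lt_of_le one_pos hNδ1))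
    push_cast at this ⊢
    linarith
  have hM0 : (0:ℝ) ≤ (m:ℝ) := by positivity
  -- a facts
  have hceil_lb : (k:ℝ)/2 ≤ (⌈(k:ℝ)/2⌉₊ : ℝ) := Nat.le_ceil _
  have hceil_ub : ((⌈(k:ℝ)/2⌉₊ : ℕ) : ℝ) ≤ (k:ℝ)/2 + 1 := by
    have := Nat.ceil_lt_add_one (by positivity : (0:ℝ) ≤ (k:ℝ)/2)
    linarith
  have haR : (a:ℝ) = (⌈(k:ℝ)/2⌉₊ : ℝ) + (ℓ:ℝ) * (m:ℝ) := by rw [ha]; push_cast; ring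
  have hbR : (b:ℝ) = (a:ℝ) + (m:ℝ) := by rw [hb]; push_cast; ring
  have hka2 : (k:ℝ) ≤ 2*(a:ℝ) := by
    have hl0 : (0:ℝ) ≤ (ℓ:ℝ) * (m:ℝ) := by positivity
    rw [haR]; linarith
  have hk2a : k ≤ 2*a := by exact_mod_cast hka2
  -- sqrt facts
  have hs0 : (0:ℝ) < Real.sqrt k := Real.sqrt_pos.mpr hk0
  have hss : Real.sqrt k * Real.sqrt k = (k:ℝ) := Real.mul_self_sqrt hk0.le
  have hs2 : (2:ℝ) ≤ Real.sqrt k := by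
    nlinarith [Real.sq_sqrt hk0.le, Real.sqrt_nonneg (k:ℝ)]
  have hsN : (N:ℝ)^(ε/2) ≤ Real.sqrt k := by
    have h1 : (N:ℝ)^(ε/2) * (N:ℝ)^(ε/2) = (N:ℝ)^ε := by
      rw [← Real.rpow_add hr0]; ring_nf
    nlinarith [Real.sqrt_nonneg (k:ℝ), Real.rpow_nonneg hr0.le (ε/2),
      Real.sq_sqrt hk0.le]
  have hl1 : (ℓ:ℝ) + 1 ≤ Real.sqrt k := by linarith
  -- 2b - k bound
  have hbk2 : 2*(b:ℝ) - (k:ℝ) ≤ 2 + 2*((ℓ:ℝ)+1)*(m:ℝ) := by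
    rw [hbR, haR]; linarith
  -- per-step bound
  have hstep : ∀ j, a ≤ j → j + 1 ≤ b →
      (k.choose j : ℝ) - (k.choose (j+1) : ℝ) ≤
        (k.choose a : ℝ) * (2*(b:ℝ) - (k:ℝ)) * 2 / (k:ℝ) := by
    intro j hj hjb
    have hjk : j < k := lt_of_lt_of_le hjb hbk
    have hid : (k.choose (j+1) : ℝ) * ((j:ℝ)+1) = (k.choose j : ℝ) * ((k:ℝ) - (j:ℝ)) := by
      have h := Nat.choose_succ_right_eq k j
      have h' : (k.choose (j+1) : ℝ) * (((j+1) : ℕ) : ℝ)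
          = (k.choose j : ℝ) * (((k - j : ℕ)) : ℝ) := by exact_mod_cast h
      rw [Nat.cast_sub hjk.le] at h'
      push_cast at h'
      linarith
    have hcj : (k.choose j : ℝ) ≤ (k.choose a : ℝ) := by
      exact_mod_cast choose_anti' k a hk2a j hj
    have hdec : (k.choose (j+1) : ℝ) ≤ (k.choose j : ℝ) := by
      exact_mod_cast choose_anti_step' k j (by omega)
    have hX0 : (0:ℝ) ≤ (k.choose j : ℝ) - (k.choose (j+1) : ℝ) := by linarith
    have hP : ((k.choose j : ℝ) - (k.choose (j+1) : ℝ)) * ((j:ℝ)+1)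
        = (k.choose j : ℝ) * (2*(j:ℝ)+1-(k:ℝ)) := by
      linear_combination -hid
    have h3 : (0:ℝ) ≤ 2*(j:ℝ)+1-(k:ℝ) := by
      have : k ≤ 2*j+1 := by omega
      have := (Nat.cast_le (α := ℝ)).mpr this
      push_cast at this; linarith
    have h1 : 2*(j:ℝ)+1-(k:ℝ) ≤ 2*(b:ℝ)-(k:ℝ) := by
      have : j + 1 ≤ b := hjb
      have := (Nat.cast_le (α := ℝ)).mpr this
      push_cast at this; linarith
    have h2 : (k:ℝ) ≤ 2*((j:ℝ)+1) := by
      have : k ≤ 2*(j+1) := by omega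
      have := (Nat.cast_le (α := ℝ)).mpr this
      push_cast at this; linarith
    have hca0 : (0:ℝ) ≤ (k.choose a : ℝ) := by positivity
    rw [le_div_iff₀ hk0]
    calc ((k.choose j : ℝ) - (k.choose (j+1) : ℝ)) * (k:ℝ)
        ≤ ((k.choose j : ℝ) - (k.choose (j+1) : ℝ)) * (2*((j:ℝ)+1)) :=
          mul_le_mul_of_nonneg_left h2 hX0
      _ = 2 * ((k.choose j : ℝ) * (2*(j:ℝ)+1-(k:ℝ))) := by linear_combination 2*hP
      _ ≤ 2 * ((k.choose a : ℝ) * (2*(b:ℝ)-(k:ℝ))) := by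
          nlinarith [mul_le_mul hcj h1 h3 hca0]
      _ = (k.choose a : ℝ) * (2*(b:ℝ)-(k:ℝ)) * 2 := by ring
  -- telescoping
  have htel : ∀ i, a + i ≤ b →
      (k.choose a : ℝ) - (k.choose (a+i) : ℝ) ≤
        (i:ℝ) * ((k.choose a : ℝ) * (2*(b:ℝ)-(k:ℝ)) * 2 / (k:ℝ)) := by
    intro i
    induction i with
    | zero => intro _; simp
    | succ n ih =>
      intro hi
      have h1 := ih (by omega)
      have h2 := hstep (a+n) (by omega) (by omega)
      have e : a + (n+1) = (a+n) + 1 := by omega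
      rw [e]
      push_cast at h1 h2 ⊢
      linarith
  have hmono : (k.choose b : ℝ) ≤ (k.choose a : ℝ) := by
    exact_mod_cast choose_anti' k a hk2a b (by omega)
  have hmain : (k.choose a : ℝ) - (k.choose b : ℝ) ≤
      (m:ℝ) * ((k.choose a : ℝ) * (2*(b:ℝ)-(k:ℝ)) * 2 / (k:ℝ)) := by
    have := htel m (by omega)
    rwa [← hb] at this
  -- numeric bound
  have hQ : (m:ℝ) * ((2*(b:ℝ)-(k:ℝ)) * 2 / (k:ℝ)) ≤ 24 * (N:ℝ) ^ (-(3 * ε) / 10) := by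
    set s := Real.sqrt k with hs
    have hbk3 : 2*(b:ℝ) - (k:ℝ) ≤ 2 + 2*s*(m:ℝ) := by
      have : 2*((ℓ:ℝ)+1)*(m:ℝ) ≤ 2*s*(m:ℝ) := by nlinarith
      linarith
    have step1 : (m:ℝ) * ((2*(b:ℝ)-(k:ℝ)) * 2 / (k:ℝ)) ≤
        (4*(m:ℝ) + 4*s*(m:ℝ)*(m:ℝ)) / (k:ℝ) := by
      rw [show (m:ℝ) * ((2*(b:ℝ)-(k:ℝ)) * 2 / (k:ℝ))
          = ((m:ℝ) * (2*(b:ℝ)-(k:ℝ)) * 2) / (k:ℝ) from by ring]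
      gcongr
      nlinarith [mul_le_mul_of_nonneg_left hbk3 hM0]
    have step2 : (4*(m:ℝ) + 4*s*(m:ℝ)*(m:ℝ)) / (k:ℝ) =
        4*(m:ℝ)/(k:ℝ) + 4*(m:ℝ)*(m:ℝ)/s := by
      have h2 : (4*s*(m:ℝ)*(m:ℝ))/(k:ℝ) = 4*(m:ℝ)*(m:ℝ)/s := by
        rw [← hss, div_eq_div_iff (by positivity) hs0.ne']
        ring
      rw [add_div, h2]
    have t1 : 4*(m:ℝ)/(k:ℝ) ≤ 8 * (N:ℝ)^(δ - ε) := by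
      have : 4*(m:ℝ)/(k:ℝ) ≤ 8*(N:ℝ)^δ/(N:ℝ)^ε := by
        apply div_le_div₀ (by positivity) (by linarith) (by positivity) hk
      rw [Real.rpow_sub hr0, ← mul_div_assoc]
      linarith [this]
    have t2 : 4*(m:ℝ)*(m:ℝ)/s ≤ 16 * (N:ℝ)^(2*δ - ε/2) := by
      have hnum : 4*(m:ℝ)*(m:ℝ) ≤ 16*(N:ℝ)^(2*δ) := by
        have h2d : (N:ℝ)^δ * (N:ℝ)^δ = (N:ℝ)^(2*δ) := by
          rw [← Real.rpow_add hr0]; ring_nf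
        nlinarith [Real.rpow_nonneg hr0.le δ]
      have : 4*(m:ℝ)*(m:ℝ)/s ≤ 16*(N:ℝ)^(2*δ)/(N:ℝ)^(ε/2) := by
        apply div_le_div₀ (by positivity) hnum (by positivity) hsN
      rw [Real.rpow_sub hr0, ← mul_div_assoc]
      linarith [this]
    have e1 : (N:ℝ)^(δ - ε) ≤ (N:ℝ)^(-(3*ε)/10) :=
      Real.rpow_le_rpow_of_exponent_le hr1 (by linarith)
    have e2 : (N:ℝ)^(2*δ - ε/2) ≤ (N:ℝ)^(-(3*ε)/10) :=
      Real.rpow_le_rpow_of_exponent_le hr1 (by linarith)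
    calc (m:ℝ) * ((2*(b:ℝ)-(k:ℝ)) * 2 / (k:ℝ))
        ≤ (4*(m:ℝ) + 4*s*(m:ℝ)*(m:ℝ)) / (k:ℝ) := step1
      _ = 4*(m:ℝ)/(k:ℝ) + 4*(m:ℝ)*(m:ℝ)/s := step2
      _ ≤ 8 * (N:ℝ)^(δ - ε) + 16 * (N:ℝ)^(2*δ - ε/2) := by linarith
      _ ≤ 24 * (N:ℝ) ^ (-(3 * ε) / 10) := by linarith
  have hca0 : (0:ℝ) ≤ (k.choose a : ℝ) := by positivity
  have : |(k.choose a : ℝ) - (k.choose b : ℝ)| = (k.choose a : ℝ) - (k.choose b : ℝ) :=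
    abs_of_nonneg (by linarith)
  rw [this]
  calc (k.choose a : ℝ) - (k.choose b : ℝ)
      ≤ (m:ℝ) * ((k.choose a : ℝ) * (2*(b:ℝ)-(k:ℝ)) * 2 / (k:ℝ)) := hmain
    _ = (k.choose a : ℝ) * ((m:ℝ) * ((2*(b:ℝ)-(k:ℝ)) * 2 / (k:ℝ))) := by ring
    _ ≤ (k.choose a : ℝ) * (24 * (N:ℝ) ^ (-(3 * ε) / 10)) :=
        mul_le_mul_of_nonneg_left hQ hca0
    _ = 24 * (k.choose a : ℝ) * (N:ℝ) ^ (-(3 * ε) / 10) := by ring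
end

section
/- Let x_n = θ·n + β mod 1 for n = 0, 1, ..., M−1, where θ is an irrational real number with finite irrationality exponent κ and β is any real number. Then for any subinterval (a,b) ⊂ (0,1) and any ε' > 0 with −1/κ + ε' < 0, the number of indices n with x_n ∈ (a,b) equals (b−a)·M + O(M^{1−1/κ+ε'}), with the implied constant independent of β. -/
open Finset

/-- The set of good rational approximations of `x` at quality `μ`. -/
def irrApproxSet (x : ℝ) (μ : ℝ) : Set (ℤ × ℤ) :=
  {pq | 0 < pq.2 ∧ IsCoprime pq.1 pq.2 ∧ 0 < |x - (pq.1 : ℝ) / (pq.2 : ℝ)| ∧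
    |x - (pq.1 : ℝ) / (pq.2 : ℝ)| < 1 / ((pq.2 : ℝ) ^ μ)}

/-- The irrationality exponent of `x`, as an extended real. -/
noncomputable def irrationalityExponent (x : ℝ) : EReal :=
  sSup {e : EReal | ∃ μ : ℝ, e = (μ : EReal) ∧ (irrApproxSet x μ).Infinite}

/-!
By Dirichlet, for every `Q` there is `p/q` with `q ≤ Q` and `q |θ - p/q| < 1/Q`. Over `q`
consecutive indices the points `θ n + β` then stay within `1/Q` of the points `c + i p/q`, which
modulo `1` hit each multiple of `1/q` exactly once; so each block of `q` consecutive indices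
has `q (b - a) + O(1)` hits, and cutting `[0, M)` into blocks leaves an error `O(M/q + q)`.
For `μ` above the irrationality exponent, `|θ - p/q| ≫ q^{-μ}`, hence `q^{μ-1} ≫ Q`; taking
`Q ≈ M^{1-1/μ}` makes both `M/q` and `q` of size `O(M^{1-1/μ})`, and `μ = (1/κ - ε')⁻¹` gives
the exponent `1 - 1/κ + ε'`.
-/

theorem abs_card_Icc_ceil_floor_sub_le {x y : ℝ} (hxy : x ≤ y) :
    |(#(Icc ⌈x⌉ ⌊y⌋) : ℝ) - (y - x)| ≤ 1 := by
  have hle : ⌈x⌉ ≤ ⌊y⌋ + 1 := by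
    have : (⌈x⌉ : ℝ) < ⌊y⌋ + 2 := by linarith [Int.ceil_lt_add_one x, Int.lt_floor_add_one y]
    have : ⌈x⌉ < ⌊y⌋ + 2 := by exact_mod_cast this
    omega
  have hcard : (#(Icc ⌈x⌉ ⌊y⌋) : ℝ) = ⌊y⌋ + 1 - ⌈x⌉ := by
    exact_mod_cast Int.card_Icc_of_le _ _ hle
  rw [hcard, abs_le]
  constructor <;> linarith [Int.le_ceil x, Int.ceil_lt_add_one x, Int.floor_le y,
    Int.lt_floor_add_one y]

theorem add_sub_mul_floor_div_eq_fract (c : ℝ) {q : ℕ} (hq : 0 < q) (n : ℤ) :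
    c + ((n - q * ⌊c + n / q⌋ : ℤ) : ℝ) / q = Int.fract (c + n / q) := by
  rw [Int.fract]
  push_cast
  field_simp
  ring

theorem sub_mul_floor_add_div_eq {c : ℝ} {q : ℕ} (hq : 0 < q) {m n : ℤ} (hmn : (q : ℤ) ∣ n - m)
    (hm : c + (m : ℝ) / q ∈ Set.Ico 0 1) : n - q * ⌊c + n / q⌋ = m := by
  obtain ⟨w, hw⟩ := hmn
  have : c + (n : ℝ) / q = (c + (m : ℝ) / q) + w := by
    rw [show n = m + q * w by linarith]
    push_cast
    field_simp
    ring
  rw [this, Int.floor_add_intCast, Int.floor_eq_zero_iff.mpr hm]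
  linarith

theorem Int.fract_eq_fract_add_sub {R : Type*} [Ring R] [LinearOrder R] [IsOrderedRing R]
    [FloorRing R] {y z : R} (h₀ : 0 ≤ Int.fract z + (y - z)) (h₁ : Int.fract z + (y - z) < 1) :
    Int.fract y = Int.fract z + (y - z) :=
  Int.fract_eq_iff.mpr ⟨h₀, h₁, ⌊z⌋, by rw [Int.fract]; abel⟩

theorem count_fract_add_mul_div_mem_Icc {p : ℤ} {q : ℕ} (hq : 0 < q) (hpq : IsCoprime p q)
    (c : ℝ) {u v : ℝ} (hu : 0 ≤ u) (hv : v < 1) :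
    Nat.count (fun i : ℕ => Int.fract (c + i * p / q) ∈ Set.Icc u v) q =
      #(Icc ⌈q * (u - c)⌉ ⌊q * (v - c)⌋) := by
  obtain ⟨s, t, hst⟩ := hpq
  have hq' : (0 : ℝ) < q := by positivity
  have hqz : (0 : ℤ) < q := by exact_mod_cast hq
  have hmem : ∀ m : ℤ, m ∈ Icc ⌈q * (u - c)⌉ ⌊q * (v - c)⌋ ↔ c + (m : ℝ) / q ∈ Set.Icc u v := by
    intro m
    rw [Finset.mem_Icc, Int.ceil_le, Int.le_floor, Set.mem_Icc, ← sub_le_iff_le_add',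
      le_div_iff₀ hq', ← le_sub_iff_add_le', div_le_iff₀ hq', mul_comm (u - c), mul_comm (v - c)]
  -- `i` goes to the representative `m` of `i * p` mod `q` with `c + m / q ∈ [0, 1)`;
  -- the inverse multiplies by `s`, an inverse of `p` mod `q`
  set e : ℕ → ℤ := fun i => i * p - q * ⌊c + (i * p : ℤ) / q⌋
  have he : ∀ i : ℕ, c + (e i : ℝ) / q = Int.fract (c + i * p / q) := fun i => by
    simp only [e]
    exact_mod_cast add_sub_mul_floor_div_eq_fract c hq (i * p)
  have hinv : ∀ m ∈ Icc ⌈q * (u - c)⌉ ⌊q * (v - c)⌋, e (m * s % q).toNat = m := by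
    intro m hm
    obtain ⟨h₁, h₂⟩ := (hmem m).mp hm
    refine sub_mul_floor_add_div_eq hq ⟨-(m * t) - m * s / q * p, ?_⟩ ⟨hu.trans h₁, h₂.trans_lt hv⟩
    rw [Int.toNat_of_nonneg (Int.emod_nonneg _ hqz.ne'), Int.emod_def]
    linear_combination m * hst
  rw [Nat.count_eq_card_filter_range]
  refine card_nbij' e (fun m => (m * s % q).toNat) (fun i hi => ?_) (fun m hm => ?_)
    (fun i hi => ?_) hinv
  · rw [mem_coe, mem_filter] at hi
    rw [mem_coe, hmem, he]
    exact hi.2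
  · rw [mem_coe, mem_filter, mem_range, ← he, hinv m hm]
    refine ⟨?_, (hmem m).mp hm⟩
    have := Int.emod_lt_of_pos (m * s) hqz
    have := Int.emod_nonneg (m * s) hqz.ne'
    change (m * s % q).toNat < q
    omega
  · rw [mem_coe, mem_filter, mem_range] at hi
    have : e i * s = i + q * (-(i * t) - ⌊c + (i * p : ℤ) / q⌋ * s) := by
      linear_combination (i : ℤ) * hst
    change (e i * s % q).toNat = i
    rw [this, Int.add_mul_emod_self_left,
      Int.emod_eq_of_lt (by positivity) (by exact_mod_cast hi.1)]
    rfl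

theorem abs_count_den_fract_add_mul_rat_mem_Icc_sub_le (r : ℚ) (c : ℝ) {u v : ℝ} (hu : 0 ≤ u)
    (huv : u ≤ v) (hv : v < 1) :
    |(Nat.count (fun i : ℕ => Int.fract (c + i * r) ∈ Set.Icc u v) r.den : ℝ) - r.den * (v - u)|
      ≤ 1 := by
  simp only [Rat.cast_def, mul_div_assoc']
  rw [count_fract_add_mul_div_mem_Icc r.pos (Rat.isCoprime_num_den r) c hu hv]
  convert abs_card_Icc_ceil_floor_sub_le (by gcongr : (r.den : ℝ) * (u - c) ≤ r.den * (v - c))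
    using 2
  ring

theorem abs_count_den_fract_add_mul_mem_Ioo_sub_le {θ δ a b : ℝ} (r : ℚ) (hr : r.den * |θ - r| < δ)
    (ha : δ ≤ a) (hb : b + δ < 1) (hab : 2 * δ ≤ b - a) (c : ℝ) :
    |(Nat.count (fun i : ℕ => Int.fract (c + i * θ) ∈ Set.Ioo a b) r.den : ℝ) - r.den * (b - a)|
      ≤ 2 * r.den * δ + 1 := by
  have hclose : ∀ i < r.den, |(c + i * r) - (c + i * θ)| < δ := fun i hi =>
    calc |(c + i * r) - (c + i * θ)| = i * |θ - r| := by
          rw [show c + i * r - (c + i * θ) = -(i * (θ - r)) by ring, abs_neg, abs_mul,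
            Nat.abs_cast]
      _ ≤ r.den * |θ - r| := by gcongr
      _ < δ := hr
  have hupper : Nat.count (fun i : ℕ => Int.fract (c + i * θ) ∈ Set.Ioo a b) r.den ≤
      Nat.count (fun i : ℕ => Int.fract (c + i * r) ∈ Set.Icc (a - δ) (b + δ)) r.den := by
    refine Nat.count_mono_left fun i hi ⟨h₁, h₂⟩ => ?_
    have hi := abs_lt.mp (hclose i hi)
    rw [Int.fract_eq_fract_add_sub (by linarith) (by linarith)]
    constructor <;> linarith
  have hlower : Nat.count (fun i : ℕ => Int.fract (c + i * r) ∈ Set.Icc (a + δ) (b - δ)) r.den ≤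
      Nat.count (fun i : ℕ => Int.fract (c + i * θ) ∈ Set.Ioo a b) r.den := by
    refine Nat.count_mono_left fun i hi ⟨h₁, h₂⟩ => ?_
    have hi := abs_lt.mp (hclose i hi)
    rw [Int.fract_eq_fract_add_sub (z := c + i * r) (by linarith) (by linarith)]
    constructor <;> linarith
  have hδ : 0 ≤ δ := (lt_of_le_of_lt (by positivity) hr).le
  have h₁ := abs_le.mp <| abs_count_den_fract_add_mul_rat_mem_Icc_sub_le r c
    (u := a - δ) (v := b + δ) (by linarith) (by linarith) hb
  have h₂ := abs_le.mp <| abs_count_den_fract_add_mul_rat_mem_Icc_sub_le r c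
    (u := a + δ) (v := b - δ) (by linarith) (by linarith) (by linarith)
  have hupper' : (_ : ℝ) ≤ _ := Nat.cast_le.mpr hupper
  have hlower' : (_ : ℝ) ≤ _ := Nat.cast_le.mpr hlower
  rw [abs_le]
  constructor <;> nlinarith

theorem abs_count_sub_mul_le_of_forall_window {P : ℕ → Prop} [DecidablePred P] {q : ℕ} {α E : ℝ}
    (hα₀ : 0 ≤ α) (hα₁ : α ≤ 1)
    (hwin : ∀ n, |(Nat.count (fun k => P (n + k)) q : ℝ) - q * α| ≤ E) (M : ℕ) :
    |(Nat.count P M : ℝ) - M * α| ≤ (M / q : ℕ) * E + (M % q : ℕ) := by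
  suffices h : ∀ s r : ℕ, |(Nat.count P (q * s + r) : ℝ) - (q * s + r : ℕ) * α| ≤ s * E + r by
    simpa only [Nat.div_add_mod] using h (M / q) (M % q)
  intro s r
  induction s with
  | zero =>
    have hcount : (Nat.count P r : ℝ) ≤ r := by exact_mod_cast Nat.count_le P
    simp only [mul_zero, zero_add, CharP.cast_eq_zero, zero_mul]
    rw [abs_le]
    constructor <;> nlinarith [(Nat.count P r).cast_nonneg (α := ℝ), r.cast_nonneg (α := ℝ)]
  | succ s ih =>
    rw [show q * (s + 1) + r = (q * s + r) + q by ring, Nat.count_add]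
    have hw := hwin (q * s + r)
    push_cast at ih hw ⊢
    calc _ = |((Nat.count P (q * s + r) : ℝ) - (q * s + r) * α) +
          ((Nat.count (fun k => P (q * s + r + k)) q : ℝ) - q * α)| := by ring_nf
      _ ≤ (s * E + r) + E := (abs_add_le _ _).trans (add_le_add ih hw)
      _ = (s + 1) * E + r := by ring

theorem abs_count_fract_mul_add_mem_Ioo_sub_le {θ δ a b : ℝ} (r : ℚ) (hr : r.den * |θ - r| < δ)
    (ha : δ ≤ a) (hb : b + δ < 1) (hab : 2 * δ ≤ b - a) (β : ℝ) (M : ℕ) :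
    |(Nat.count (fun n : ℕ => Int.fract (θ * n + β) ∈ Set.Ioo a b) M : ℝ) - M * (b - a)| ≤
      (M / r.den : ℕ) * (2 * r.den * δ + 1) + (M % r.den : ℕ) := by
  have hδ : 0 ≤ δ := (lt_of_le_of_lt (by positivity) hr).le
  refine abs_count_sub_mul_le_of_forall_window
    (P := fun n : ℕ => Int.fract (θ * n + β) ∈ Set.Ioo a b) (by linarith) (by linarith)
    (fun n => ?_) M
  have hshift : Nat.count (fun k => Int.fract (θ * (n + k : ℕ) + β) ∈ Set.Ioo a b) r.den =
      Nat.count (fun i : ℕ => Int.fract ((θ * n + β) + i * θ) ∈ Set.Ioo a b) r.den := by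
    congr 1
    funext k
    push_cast
    ring_nf
  rw [hshift]
  exact abs_count_den_fract_add_mul_mem_Ioo_sub_le r hr ha hb hab (θ * n + β)

theorem exists_forall_abs_count_fract_mul_add_mem_Ioo_sub_le {a b : ℝ} (ha : 0 < a) (hab : a < b)
    (hb : b < 1) :
    ∃ Q₀ : ℕ, ∀ (θ β : ℝ) (Q M : ℕ) (r : ℚ), Q₀ ≤ Q → r.den ≤ Q → r.den * |θ - r| < 1 / Q →
      |(Nat.count (fun n : ℕ => Int.fract (θ * n + β) ∈ Set.Ioo a b) M : ℝ) - M * (b - a)| ≤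
        3 * ((M : ℝ) / r.den) + Q := by
  set d := min a (min (1 - b) (b - a))
  have hd : 0 < d / 2 := half_pos (lt_min ha (lt_min (by linarith) (by linarith)))
  obtain ⟨Q₀, hQ₀⟩ := (tendsto_one_div_atTop_nhds_zero_nat.eventually
    (gt_mem_nhds hd)).exists_forall_of_atTop
  refine ⟨Q₀, fun θ β Q M r hQ₀Q hrQ hr => ?_⟩
  have hδ : 1 / (Q : ℝ) < d / 2 := hQ₀ Q hQ₀Q
  have hQ : (0 : ℝ) < Q := by exact_mod_cast r.pos.trans_le hrQ
  have hcount := abs_count_fract_mul_add_mem_Ioo_sub_le (a := a) (b := b) r hr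
    (by linarith [min_le_left a (min (1 - b) (b - a))])
    (by linarith [(min_le_right a _).trans (min_le_left (1 - b) (b - a))])
    (by linarith [(min_le_right a _).trans (min_le_right (1 - b) (b - a))]) β M
  have hblock : 2 * r.den * (1 / (Q : ℝ)) + 1 ≤ 3 := by
    rw [mul_one_div, div_add_one hQ.ne', div_le_iff₀ hQ]
    linarith [(Nat.cast_le (α := ℝ)).mpr hrQ]
  have hmod : ((M % r.den : ℕ) : ℝ) ≤ Q := by
    exact_mod_cast (Nat.mod_lt M r.pos).le.trans hrQ
  refine hcount.trans ?_
  rw [mul_comm 3]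
  gcongr
  exact Nat.cast_div_le

theorem Rat.num_den_injective : Function.Injective fun r : ℚ => (r.num, (r.den : ℤ)) :=
  fun r r' h => by
    simp only [Prod.mk.injEq, Nat.cast_inj] at h
    exact Rat.ext h.1 h.2

theorem num_den_mem_irrApproxSet_iff {x μ : ℝ} {r : ℚ} :
    (r.num, (r.den : ℤ)) ∈ irrApproxSet x μ ↔ 0 < |x - r| ∧ |x - r| < 1 / (r.den : ℝ) ^ μ := by
  rw [Rat.cast_def]
  simp [irrApproxSet, r.pos, Rat.isCoprime_num_den]

theorem two_le_irrationalityExponent {x : ℝ} (hx : Irrational x) :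
    ((2 : ℝ) : EReal) ≤ irrationalityExponent x := by
  refine le_sSup ⟨2, rfl, ?_⟩
  refine ((Real.infinite_rat_abs_sub_lt_one_div_den_sq_of_irrational hx).image
    Rat.num_den_injective.injOn).mono ?_
  rintro _ ⟨r, hr, rfl⟩
  rw [num_den_mem_irrApproxSet_iff, Real.rpow_two]
  exact ⟨abs_pos.mpr (sub_ne_zero.mpr (hx.ne_rat r)), hr⟩

theorem irrApproxSet_finite_of_irrationalityExponent_lt {x μ : ℝ}
    (h : irrationalityExponent x < μ) : (irrApproxSet x μ).Finite := by
  by_contra hinf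
  have : (μ : EReal) ≤ irrationalityExponent x := le_sSup ⟨μ, rfl, hinf⟩
  exact this.not_gt h

theorem Irrational.exists_pos_div_den_rpow_le_abs_sub {x μ : ℝ} (hx : Irrational x)
    (hfin : (irrApproxSet x μ).Finite) : ∃ c > 0, ∀ r : ℚ, c / (r.den : ℝ) ^ μ ≤ |x - r| := by
  set g : ℚ → ℝ := fun r => |x - r| * (r.den : ℝ) ^ μ
  have hg : ∀ r, 0 < g r := fun r =>
    mul_pos (abs_pos.mpr (sub_ne_zero.mpr (hx.ne_rat r))) (by positivity)
  set T := {r : ℚ | (r.num, (r.den : ℤ)) ∈ irrApproxSet x μ}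
  have hT : T.Finite := hfin.preimage Rat.num_den_injective.injOn
  obtain ⟨c, hc, hcT⟩ : ∃ c > 0, ∀ r ∈ T, c ≤ g r := by
    rcases T.eq_empty_or_nonempty with hT₀ | hTne
    · exact ⟨1, one_pos, by simp [hT₀]⟩
    · obtain ⟨r₀, -, hr₀⟩ := Set.exists_min_image T g hT hTne
      exact ⟨g r₀, hg r₀, hr₀⟩
  refine ⟨min c 1, by positivity, fun r => ?_⟩
  rw [div_le_iff₀ (by positivity)]
  by_cases hr : r ∈ T
  · exact (min_le_left _ _).trans (hcT r hr)
  · have : 1 / (r.den : ℝ) ^ μ ≤ |x - r| := not_lt.mp fun h =>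
      hr (num_den_mem_irrApproxSet_iff.mpr ⟨abs_pos.mpr (sub_ne_zero.mpr (hx.ne_rat r)), h⟩)
    rw [div_le_iff₀ (by positivity)] at this
    exact (min_le_right _ _).trans this

theorem exists_rat_den_le_and_mul_le_den_rpow {x μ c : ℝ}
    (hc : ∀ r : ℚ, c / (r.den : ℝ) ^ μ ≤ |x - r|) {Q : ℕ} (hQ : 0 < Q) :
    ∃ r : ℚ, r.den ≤ Q ∧ r.den * |x - r| < 1 / Q ∧ c * (Q + 1) ≤ (r.den : ℝ) ^ (μ - 1) := by
  obtain ⟨r, hr, hrQ⟩ := Real.exists_rat_abs_sub_le_and_den_le x hQ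
  have hd : (0 : ℝ) < r.den := by positivity
  refine ⟨r, hrQ, ?_, ?_⟩
  · calc r.den * |x - r| ≤ r.den * (1 / ((Q + 1) * r.den)) := by gcongr
      _ = 1 / (Q + 1) := by field_simp
      _ < 1 / Q := by gcongr; linarith
  · have := (hc r).trans hr
    rw [div_le_div_iff₀ (by positivity) (by positivity), one_mul] at this
    rw [Real.rpow_sub_one hd.ne', le_div_iff₀ hd]
    linarith

theorem div_le_rpow_mul_rpow {M q c μ : ℝ} (hM : 0 < M) (hq : 0 < q) (hc : 0 < c) (hμ : 1 < μ)
    (h : c * M ^ (1 - μ⁻¹) ≤ q ^ (μ - 1)) : M / q ≤ c ^ (-(μ - 1)⁻¹) * M ^ (1 - μ⁻¹) := by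
  have ht : 0 < (μ - 1)⁻¹ := inv_pos.mpr (by linarith)
  have hq' : c ^ (μ - 1)⁻¹ * M ^ μ⁻¹ ≤ q :=
    calc c ^ (μ - 1)⁻¹ * M ^ μ⁻¹ = (c * M ^ (1 - μ⁻¹)) ^ (μ - 1)⁻¹ := by
          rw [Real.mul_rpow hc.le (by positivity), ← Real.rpow_mul hM.le]
          have : μ - 1 ≠ 0 := by linarith
          congr 2
          field_simp
      _ ≤ (q ^ (μ - 1)) ^ (μ - 1)⁻¹ := Real.rpow_le_rpow (by positivity) h ht.le
      _ = q := by rw [← Real.rpow_mul hq.le, mul_inv_cancel₀ (by linarith), Real.rpow_one]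
  calc M / q ≤ M / (c ^ (μ - 1)⁻¹ * M ^ μ⁻¹) := by gcongr
    _ = c ^ (-(μ - 1)⁻¹) * M ^ (1 - μ⁻¹) := by
      rw [Real.rpow_neg hc.le, Real.rpow_sub hM, Real.rpow_one]
      field_simp

theorem Irrational.exists_rat_den_le_and_div_den_le {θ μ : ℝ} (hθ : Irrational θ)
    (hμ : irrationalityExponent θ < μ) (hμ₁ : 1 < μ) :
    ∃ K > 0, ∀ M Q : ℕ, 0 < M → (M : ℝ) ^ (1 - μ⁻¹) ≤ Q →
      ∃ r : ℚ, r.den ≤ Q ∧ r.den * |θ - r| < 1 / Q ∧ (M : ℝ) / r.den ≤ K * M ^ (1 - μ⁻¹) := by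
  obtain ⟨c, hc, hcr⟩ :=
    hθ.exists_pos_div_den_rpow_le_abs_sub (irrApproxSet_finite_of_irrationalityExponent_lt hμ)
  refine ⟨c ^ (-(μ - 1)⁻¹), by positivity, fun M Q hM hMQ => ?_⟩
  have hQ : 0 < Q := by exact_mod_cast (Real.rpow_pos_of_pos (by positivity) _).trans_le hMQ
  obtain ⟨r, hrQ, hr, hrμ⟩ := exists_rat_den_le_and_mul_le_den_rpow hcr hQ
  refine ⟨r, hrQ, hr, div_le_rpow_mul_rpow (by positivity) (by positivity) hc hμ₁ ?_⟩
  calc c * (M : ℝ) ^ (1 - μ⁻¹) ≤ c * (Q + 1) := by gcongr; linarith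
    _ ≤ _ := hrμ

theorem exists_nat_ge_and_ge_and_le_mul (N : ℕ) {x : ℝ} (hx : 1 ≤ x) :
    ∃ Q : ℕ, N ≤ Q ∧ x ≤ Q ∧ (Q : ℝ) ≤ (N + 2) * x := by
  refine ⟨max N ⌈x⌉₊, le_max_left _ _, (Nat.le_ceil x).trans (Nat.cast_le.mpr (le_max_right _ _)),
    ?_⟩
  have : (max N ⌈x⌉₊ : ℝ) ≤ N + ⌈x⌉₊ := by
    exact_mod_cast max_le_add_of_nonneg (Nat.zero_le _) (Nat.zero_le _)
  push_cast
  nlinarith [Nat.ceil_lt_add_one (by linarith : 0 ≤ x), mul_le_mul_of_nonneg_left hx N.cast_nonneg]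

/-- Discrepancy bound for finite arithmetic progressions mod 1: if `θ` is irrational with
finite irrationality exponent `κ`, then for any `(a,b) ⊂ (0,1)` and `ε' > 0` with
`−1/κ + ε' < 0`, the number of `n < M` with `θn + β mod 1 ∈ (a,b)` is
`(b−a)·M + O(M^{1−1/κ+ε'})`, uniformly in the shift `β`. -/
theorem card_fract_mem_Ioo_arith_prog (θ : ℝ) (hθ : Irrational θ) (κ : ℝ)
    (hκ : irrationalityExponent θ = (κ : EReal)) (a b ε' : ℝ)
    (ha : 0 < a) (hab : a < b) (hb : b < 1) (hε' : 0 < ε') (hneg : -1 / κ + ε' < 0) :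
    ∃ C > 0, ∀ β : ℝ, ∀ M : ℕ, 0 < M →
      |(((Finset.range M).filter
            (fun n : ℕ => a < Int.fract (θ * (n : ℝ) + β) ∧ Int.fract (θ * (n : ℝ) + β) < b)).card : ℝ) -
          (b - a) * M| ≤ C * (M : ℝ) ^ (1 - 1 / κ + ε') := by
  have hκ₂ : 2 ≤ κ := EReal.coe_le_coe_iff.mp (hκ ▸ two_le_irrationalityExponent hθ)
  have hρ : 0 < 1 / κ - ε' := by rw [neg_div] at hneg; linarith
  set μ := (1 / κ - ε')⁻¹
  have hκμ : κ < μ := by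
    rw [lt_inv_comm₀ (by linarith) hρ, one_div]
    linarith
  have hμ₁ : 1 < μ := by linarith
  obtain ⟨K, hK, hdioph⟩ :=
    hθ.exists_rat_den_le_and_div_den_le (hκ ▸ EReal.coe_lt_coe_iff.mpr hκμ) hμ₁
  obtain ⟨Q₀, hQ₀⟩ := exists_forall_abs_count_fract_mul_add_mem_Ioo_sub_le ha hab hb
  refine ⟨3 * K + (Q₀ + 2), by positivity, fun β M hM => ?_⟩
  rw [show 1 - 1 / κ + ε' = 1 - μ⁻¹ by rw [inv_inv]; ring]
  have hMγ : 1 ≤ (M : ℝ) ^ (1 - μ⁻¹) :=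
    Real.one_le_rpow (by exact_mod_cast hM) (by linarith [inv_lt_one_of_one_lt₀ hμ₁])
  obtain ⟨Q, hQ₀Q, hMQ, hQM⟩ := exists_nat_ge_and_ge_and_le_mul Q₀ hMγ
  obtain ⟨r, hrQ, hr, hrM⟩ := hdioph M Q hM hMQ
  calc _ = |(Nat.count (fun n : ℕ => Int.fract (θ * n + β) ∈ Set.Ioo a b) M : ℝ) -
        M * (b - a)| := by
        rw [Nat.count_eq_card_filter_range, mul_comm]
        rfl
    _ ≤ 3 * ((M : ℝ) / r.den) + Q := hQ₀ θ β Q M r hQ₀Q hrQ hr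
    _ ≤ 3 * (K * M ^ (1 - μ⁻¹)) + (Q₀ + 2) * M ^ (1 - μ⁻¹) := by gcongr
    _ = _ := by ring
end

section
/- Let B > 1 and let m ≥ 2 be an integer. Fix p_1, ..., p_{m−1} ∈ (0,1) with p_1 + ... + p_{m−1} < 1 and set p_m = 1 − (p_1 + ... + p_{m−1}). Suppose log_B(p_1/p_2) is irrational. For N ≥ 1 and an interval (a,b) ⊂ (0,1), let F_N(a,b) = (1/m^N)·Σ (N choose k_1,...,k_m)·𝟙(log_B(p_1^{k_1}⋯p_m^{k_m}) mod 1 ∈ (a,b)), the sum over all nonnegative integer tuples with k_1 + ... + k_m = N. Then F_N(a,b) → b − a as N → ∞. -/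
/-!
Write `cᵢ = log_B pᵢ`. A stick with exponent vector `k` has `log_B`-length `∑ kᵢ cᵢ`, and
`multinomial k` of the `m ^ N` sticks share it, so `F_N(a, b)` is the mass of an arc under the law
`μ_N` of `∑ kᵢ cᵢ mod 1`. By the multinomial theorem the `n`-th Fourier coefficient of `μ_N` is
`((1/m) ∑ᵢ e(n cᵢ)) ^ N`; as `n (c₁ - c₂)` is irrational, two of the unit vectors `e(n cᵢ)` differ,
so their average has modulus `< 1` and the coefficient tends to `0`. Trigonometric polynomials are
dense in `C(ℝ/ℤ, ℂ)`, so `μ_N` converges weakly to Haar measure (Weyl's criterion), and the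
portmanteau theorem applies to arcs, whose boundary is null.
-/

open Finset Filter MeasureTheory Set
open scoped Topology ENNReal

theorem norm_sum_lt_sum_norm_of_not_sameRay {E ι : Type*} [NormedAddCommGroup E]
    [NormedSpace ℝ E] [StrictConvexSpace ℝ E] {s : Finset ι} {z : ι → E} {i j : ι} (hi : i ∈ s)
    (hj : j ∈ s) (h : ¬SameRay ℝ (z i) (z j)) : ‖∑ k ∈ s, z k‖ < ∑ k ∈ s, ‖z k‖ := by
  classical
  have hij : i ≠ j := by rintro rfl; exact h SameRay.rfl
  have hsub : {i, j} ⊆ s := insert_subset hi (singleton_subset_iff.2 hj)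
  rw [← sum_sdiff hsub, ← sum_sdiff hsub, sum_pair hij, sum_pair hij]
  calc ‖∑ k ∈ s \ {i, j}, z k + (z i + z j)‖
      ≤ ‖∑ k ∈ s \ {i, j}, z k‖ + ‖z i + z j‖ := norm_add_le _ _
    _ < ∑ k ∈ s \ {i, j}, ‖z k‖ + (‖z i‖ + ‖z j‖) :=
      add_lt_add_of_le_of_lt (norm_sum_le _ _) (norm_add_lt_of_not_sameRay h)

theorem Finset.Nat.sum_antidiagonalTuple_multinomial_mul_prod_pow {R : Type*} [CommSemiring R]
    (m N : ℕ) (f : Fin m → R) :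
    ∑ k ∈ Finset.Nat.antidiagonalTuple m N, (Nat.multinomial univ k : R) * ∏ i, f i ^ k i =
      (∑ i, f i) ^ N := by
  rw [← piAntidiag_univ_fin_eq_antidiagonalTuple, sum_pow_eq_sum_piAntidiag]

section CompactSpace

variable {X E : Type*} [TopologicalSpace X] [CompactSpace X] [MeasurableSpace X]
  [OpensMeasurableSpace X] [NormedAddCommGroup E]

theorem ContinuousMap.integrable (μ : Measure X) [IsFiniteMeasure μ] (g : C(X, E)) :
    Integrable g μ :=
  .of_bound g.continuous.aestronglyMeasurable_of_compactSpace ‖g‖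
    (.of_forall g.norm_coe_le_norm)

theorem ContinuousMap.lipschitzWith_integral [NormedSpace ℝ E] (μ : Measure X)
    [IsProbabilityMeasure μ] : LipschitzWith 1 fun g : C(X, E) ↦ ∫ x, g x ∂μ := by
  refine LipschitzWith.of_dist_le_mul fun g h ↦ ?_
  rw [dist_eq_norm, dist_eq_norm, NNReal.coe_one, one_mul,
    ← integral_sub (g.integrable μ) (h.integrable μ)]
  simpa using norm_integral_le_of_norm_le_const (μ := μ)
    (.of_forall fun x ↦ (g - h).norm_coe_le_norm x)

end CompactSpace

theorem fourier_coe_sum_mul_eq_prod {T : ℝ} {ι : Type*} (s : Finset ι) (n : ℤ) (k : ι → ℕ)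
    (x : ι → ℝ) :
    fourier n (↑(∑ i ∈ s, (k i : ℝ) * x i) : AddCircle T) =
      ∏ i ∈ s, fourier n (x i : AddCircle T) ^ k i := by
  simp only [fourier_coe_apply, ← Complex.exp_nat_mul, ← Complex.exp_sum]
  congr 1
  push_cast
  rw [mul_sum, sum_div]
  exact sum_congr rfl fun i _ ↦ by ring

theorem fourier_coe_ne_of_irrational {n : ℤ} (hn : n ≠ 0) {x y : ℝ} (h : Irrational (x - y)) :
    fourier n (x : AddCircle (1 : ℝ)) ≠ fourier n (y : AddCircle (1 : ℝ)) := by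
  intro hxy
  have hzero : ((n * (x - y) : ℝ) : AddCircle (1 : ℝ)) = 0 := by
    have := AddCircle.injective_toCircle one_ne_zero (Circle.coe_injective hxy)
    rw [mul_sub, AddCircle.coe_sub, ← zsmul_eq_mul, ← zsmul_eq_mul, AddCircle.coe_zsmul,
      AddCircle.coe_zsmul, this, sub_self]
  obtain ⟨k, hk⟩ := (AddCircle.coe_eq_zero_iff 1).1 hzero
  exact (h.intCast_mul hn).ne_int k (by simpa using hk.symm)

theorem norm_sum_fourier_coe_lt_of_irrational {m : ℕ} {c : Fin m → ℝ} {i j : Fin m}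
    (hij : Irrational (c i - c j)) {n : ℤ} (hn : n ≠ 0) :
    ‖∑ l, fourier n (c l : AddCircle (1 : ℝ))‖ < m := by
  have hnorm (x : AddCircle (1 : ℝ)) : ‖fourier n x‖ = 1 := Circle.norm_coe _
  calc ‖∑ l, fourier n (c l : AddCircle (1 : ℝ))‖
      < ∑ l, ‖fourier n (c l : AddCircle (1 : ℝ))‖ :=
        norm_sum_lt_sum_norm_of_not_sameRay (mem_univ i) (mem_univ j) fun h ↦
          fourier_coe_ne_of_irrational hn hij (h.eq_of_norm_eq (by rw [hnorm, hnorm]))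
    _ = m := by simp only [hnorm, sum_const, card_univ, Fintype.card_fin, nsmul_eq_mul, mul_one]

namespace AddCircle

theorem isOpen_coe_image_Ioo {T : ℝ} (a b : ℝ) : IsOpen ((↑) '' Ioo a b : Set (AddCircle T)) :=
  QuotientAddGroup.isOpenMap_coe _ isOpen_Ioo

theorem coe_mem_coe_image_Ioo_iff {a b : ℝ} (ha : 0 ≤ a) (hb : b ≤ 1) (y : ℝ) :
    (y : AddCircle (1 : ℝ)) ∈ (↑) '' Ioo a b ↔ Int.fract y ∈ Ioo a b := by
  refine ⟨?_, fun hy ↦ ⟨_, hy, coe_fract y⟩⟩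
  rintro ⟨x, hx, hxy⟩
  rw [← coe_fract y, coe_eq_coe_iff_of_mem_Ico (a := 0) ⟨ha.trans hx.1.le, by linarith [hx.2]⟩
    ⟨Int.fract_nonneg y, by simpa using Int.fract_lt_one y⟩] at hxy
  exact hxy ▸ hx

variable {T : ℝ} [hT : Fact (0 < T)]

theorem volume_singleton (x : AddCircle T) : volume {x} = 0 := by
  rw [← Metric.closedBall_zero, volume_closedBall, mul_zero, min_eq_right hT.out.le,
    ENNReal.ofReal_zero]

theorem volume_coe_image_Ioo {a b : ℝ} (ha : 0 ≤ a) (hb : b ≤ T) :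
    volume ((↑) '' Ioo a b : Set (AddCircle T)) = ENNReal.ofReal (b - a) := by
  have hinj : InjOn ((↑) : ℝ → AddCircle T) (Ioc 0 (0 + T)) := fun x hx y hy ↦
    (coe_eq_coe_iff_of_mem_Ioc hx hy).1
  have hsub : Ioo a b ⊆ Ioc 0 (0 + T) := fun x hx ↦ ⟨ha.trans_lt hx.1, by linarith [hx.2]⟩
  rw [add_projection_respects_measure T 0 (isOpen_coe_image_Ioo a b).measurableSet,
    hinj.preimage_image_inter hsub, Real.volume_Ioo]

theorem volume_frontier_coe_image_Ioo {a b : ℝ} (hab : a ≤ b) :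
    volume (frontier ((↑) '' Ioo a b : Set (AddCircle T))) = 0 := by
  have hclosure : closure ((↑) '' Ioo a b : Set (AddCircle T)) ⊆ (↑) '' Icc a b :=
    closure_minimal (image_mono Ioo_subset_Icc_self)
      (isCompact_Icc.image (AddCircle.continuous_mk' T)).isClosed
  have hfrontier : frontier ((↑) '' Ioo a b : Set (AddCircle T)) ⊆ (↑) '' {a, b} := by
    rw [(isOpen_coe_image_Ioo a b).frontier_eq, ← Icc_sdiff_Ioo_same hab]
    rintro _ ⟨hz, hz'⟩
    obtain ⟨t, ht, rfl⟩ := hclosure hz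
    exact mem_image_of_mem _ ⟨ht, fun h ↦ hz' (mem_image_of_mem _ h)⟩
  rw [image_pair] at hfrontier
  exact measure_mono_null hfrontier (measure_union_null (volume_singleton _) (volume_singleton _))

theorem integral_fourier_haarAddCircle {n : ℤ} (hn : n ≠ 0) :
    ∫ z, fourier n z ∂(haarAddCircle : Measure (AddCircle T)) = 0 :=
  integral_eq_zero_of_add_right_eq_neg (fourier_add_half_inv_index hn hT.out)

theorem tendsto_haarAddCircle_of_tendsto_integral_fourier {ι : Type*} {l : Filter ι}
    {μ : ι → ProbabilityMeasure (AddCircle T)}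
    (h : ∀ n : ℤ, n ≠ 0 →
      Tendsto (fun i ↦ ∫ z, fourier n z ∂(μ i : Measure (AddCircle T))) l (𝓝 0)) :
    Tendsto μ l (𝓝 (⟨haarAddCircle, inferInstance⟩ : ProbabilityMeasure (AddCircle T))) := by
  let S : Set C(AddCircle T, ℂ) := {g | Tendsto (fun i ↦ ∫ z, g z ∂(μ i : Measure (AddCircle T)))
    l (𝓝 (∫ z, g z ∂haarAddCircle))}
  have hS : IsClosed S :=
    (LipschitzWith.uniformEquicontinuous _ 1 fun i ↦
      ContinuousMap.lipschitzWith_integral _).equicontinuous.isClosed_setOfPred_tendsto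
      (ContinuousMap.lipschitzWith_integral _).continuous
  have hspan : ∀ g ∈ Submodule.span ℂ (range (fourier (T := T))), g ∈ S := by
    intro g hg
    induction hg using Submodule.span_induction with
    | mem g hg =>
      obtain ⟨n, rfl⟩ := hg
      rcases eq_or_ne n 0 with rfl | hn
      · simpa [S] using tendsto_const_nhds
      · simpa only [S, mem_ofPred_eq, integral_fourier_haarAddCircle hn] using h n hn
    | zero => simpa [S] using tendsto_const_nhds
    | add g₁ g₂ _ _ h₁ h₂ =>
      simpa [S, integral_add (g₁.integrable _) (g₂.integrable _)] using h₁.add h₂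
    | smul c g _ hg =>
      simpa only [S, mem_ofPred_eq, ContinuousMap.coe_smul, Pi.smul_apply, integral_smul]
        using hg.const_smul c
  have hdense : closure (Submodule.span ℂ (range (fourier (T := T))) : Set C(AddCircle T, ℂ)) =
      univ := by
    rw [← Submodule.topologicalClosure_coe, span_fourier_closure_eq_top, Submodule.top_coe]
  exact (ProbabilityMeasure.tendsto_iff_forall_integral_rclike_tendsto ℂ).2 fun f ↦
    closure_minimal hspan hS (hdense ▸ mem_univ f.toContinuousMap)

theorem haarAddCircle_one_eq_volume :
    (haarAddCircle : Measure (AddCircle (1 : ℝ))) = volume := by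
  rw [volume_eq_smul_haarAddCircle, ENNReal.ofReal_one, one_smul]

end AddCircle

/-- For `cᵢ = log_B pᵢ`, the distribution modulo 1 of `log_B` of the `m ^ N` stick lengths after
`N` stages. -/
noncomputable def fragmentationMeasure {m : ℕ} (c : Fin m → ℝ) (N : ℕ) :
    Measure (AddCircle (1 : ℝ)) :=
  ((m : ℝ≥0∞) ^ N)⁻¹ • ∑ k ∈ Finset.Nat.antidiagonalTuple m N,
    (Nat.multinomial univ k : ℝ≥0∞) • Measure.dirac ↑(∑ i, (k i : ℝ) * c i)

section fragmentationMeasure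

variable {m : ℕ} (c : Fin m → ℝ) (N : ℕ)

theorem fragmentationMeasure_apply {s : Set (AddCircle (1 : ℝ))} (hs : MeasurableSet s) :
    fragmentationMeasure c N s = ((m : ℝ≥0∞) ^ N)⁻¹ * ∑ k ∈ Finset.Nat.antidiagonalTuple m N,
      (Nat.multinomial univ k : ℝ≥0∞) * s.indicator 1 ↑(∑ i, (k i : ℝ) * c i) := by
  simp [fragmentationMeasure, Measure.dirac_apply' _ hs]

instance [NeZero m] : IsProbabilityMeasure (fragmentationMeasure c N) := by
  constructor
  have hsum := Finset.Nat.sum_antidiagonalTuple_multinomial_mul_prod_pow (R := ℝ≥0∞) m N 1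
  simp only [Pi.one_apply, one_pow, prod_const_one, mul_one, sum_const, card_univ,
    Fintype.card_fin, nsmul_eq_mul] at hsum
  rw [fragmentationMeasure_apply c N MeasurableSet.univ]
  simp only [indicator_univ, Pi.one_apply, mul_one, hsum]
  exact ENNReal.inv_mul_cancel (by simp [NeZero.ne]) (by simp)

theorem fragmentationMeasure_real_apply {s : Set (AddCircle (1 : ℝ))} (hs : MeasurableSet s) :
    (fragmentationMeasure c N).real s = 1 / (m : ℝ) ^ N * ∑ k ∈ Finset.Nat.antidiagonalTuple m N,
      (Nat.multinomial univ k : ℝ) * s.indicator 1 ↑(∑ i, (k i : ℝ) * c i) := by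
  have hind (y) : (s.indicator (1 : AddCircle (1 : ℝ) → ℝ≥0∞) y).toReal = s.indicator 1 y ∧
      s.indicator (1 : AddCircle (1 : ℝ) → ℝ≥0∞) y ≠ ∞ := by
    by_cases h : y ∈ s <;> simp [h]
  rw [measureReal_def, fragmentationMeasure_apply c N hs, ENNReal.toReal_mul,
    ENNReal.toReal_sum fun k _ ↦ ENNReal.mul_ne_top (ENNReal.natCast_ne_top _) (hind _).2]
  simp only [one_div, ENNReal.toReal_inv, ENNReal.toReal_pow, ENNReal.toReal_natCast,
    ENNReal.toReal_mul, (hind _).1]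

theorem fragmentationMeasure_real_coe_image_Ioo {a b : ℝ} (ha : 0 ≤ a) (hb : b ≤ 1) :
    (fragmentationMeasure c N).real ((↑) '' Ioo a b) =
      1 / (m : ℝ) ^ N * ∑ k ∈ Finset.Nat.antidiagonalTuple m N, (Nat.multinomial univ k : ℝ) *
        if a < Int.fract (∑ i, (k i : ℝ) * c i) ∧ Int.fract (∑ i, (k i : ℝ) * c i) < b then 1
        else 0 := by
  classical
  simp only [fragmentationMeasure_real_apply c N (AddCircle.isOpen_coe_image_Ioo a b).measurableSet,
    indicator_apply, AddCircle.coe_mem_coe_image_Ioo_iff ha hb, Set.mem_Ioo, Pi.one_apply]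

theorem integral_fourier_fragmentationMeasure (n : ℤ) :
    ∫ z, fourier n z ∂fragmentationMeasure c N =
      ((∑ i, fourier n (c i : AddCircle (1 : ℝ))) / m) ^ N := by
  rw [fragmentationMeasure, integral_smul_measure, integral_finsetSum_measure fun k _ ↦
    ((fourier n).integrable _).smul_measure (ENNReal.natCast_ne_top _)]
  simp only [integral_smul_measure, integral_dirac, fourier_coe_sum_mul_eq_prod]
  rw [div_pow, ← Finset.Nat.sum_antidiagonalTuple_multinomial_mul_prod_pow]
  simp [div_eq_inv_mul, smul_sum, Complex.real_smul, mul_sum]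

end fragmentationMeasure

theorem tendsto_fragmentationMeasure {m : ℕ} [NeZero m] {c : Fin m → ℝ} {i j : Fin m}
    (hij : Irrational (c i - c j)) :
    Tendsto (β := ProbabilityMeasure (AddCircle (1 : ℝ)))
      (fun N ↦ ⟨fragmentationMeasure c N, inferInstance⟩) atTop
      (𝓝 ⟨AddCircle.haarAddCircle, inferInstance⟩) := by
  refine AddCircle.tendsto_haarAddCircle_of_tendsto_integral_fourier fun n hn ↦ ?_
  simp only [ProbabilityMeasure.coe_mk, integral_fourier_fragmentationMeasure]
  refine tendsto_pow_atTop_nhds_zero_of_norm_lt_one ?_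
  rw [norm_div, Complex.norm_natCast, div_lt_one (by simp [Nat.pos_of_neZero])]
  exact norm_sum_fourier_coe_lt_of_irrational hij hn

theorem tendsto_fragmentationMeasure_real_coe_image_Ioo {m : ℕ} [NeZero m] {c : Fin m → ℝ}
    {i j : Fin m} (hij : Irrational (c i - c j)) {a b : ℝ} (ha : 0 ≤ a) (hab : a ≤ b)
    (hb : b ≤ 1) :
    Tendsto (fun N ↦ (fragmentationMeasure c N).real ((↑) '' Ioo a b)) atTop (𝓝 (b - a)) := by
  have hlim := ProbabilityMeasure.tendsto_measure_of_null_frontier_of_tendsto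
    (tendsto_fragmentationMeasure hij) (E := (↑) '' Ioo a b) <| by
      refine (ProbabilityMeasure.null_iff_toMeasure_null ⟨_, inferInstance⟩ _).2 ?_
      rw [ProbabilityMeasure.coe_mk, AddCircle.haarAddCircle_one_eq_volume]
      exact AddCircle.volume_frontier_coe_image_Ioo hab
  convert NNReal.tendsto_coe.2 hlim using 2 with N
  · exact ProbabilityMeasure.measureReal_eq_coe_coeFn ⟨fragmentationMeasure c N, inferInstance⟩ _
  · refine Eq.trans ?_ (ProbabilityMeasure.measureReal_eq_coe_coeFn ⟨_, inferInstance⟩ _)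
    rw [ProbabilityMeasure.coe_mk, AddCircle.haarAddCircle_one_eq_volume, measureReal_def,
      AddCircle.volume_coe_image_Ioo ha hb, ENNReal.toReal_ofReal (by linarith)]

/-- Multi-proportion fixed fragmentation: if `log_B(p₁/p₂)` is irrational, then the
empirical probability that the logarithm (base `B`) of a stick length after stage `N`
lies, mod 1, in `(a,b)` converges to `b − a`; i.e., the stick lengths converge to strong
Benford behavior base `B`. -/
theorem stick_fragmentation_benford (B : ℝ) (m : ℕ) (hm : 2 ≤ m)
    (p : Fin m → ℝ) (hp : ∀ i, 0 < p i ∧ p i < 1)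
    (hirr : Irrational (Real.logb B (p ⟨0, by omega⟩ / p ⟨1, by omega⟩)))
    (a b : ℝ) (ha : 0 < a) (hab : a < b) (hb : b < 1) :
    Tendsto (fun N : ℕ =>
        (1 / (m : ℝ) ^ N) * ∑ k ∈ Finset.Nat.antidiagonalTuple m N,
          (Nat.multinomial Finset.univ k : ℝ) *
            (if a < Int.fract (Real.logb B (∏ i, p i ^ k i)) ∧
                Int.fract (Real.logb B (∏ i, p i ^ k i)) < b then 1 else 0))
      atTop (nhds (b - a)) := by
  have : NeZero m := ⟨by omega⟩
  set c : Fin m → ℝ := fun i ↦ Real.logb B (p i)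
  have hc : Irrational (c ⟨0, by omega⟩ - c ⟨1, by omega⟩) := by
    rwa [← Real.logb_div (hp _).1.ne' (hp _).1.ne']
  have hlog (k : Fin m → ℕ) : Real.logb B (∏ i, p i ^ k i) = ∑ i, (k i : ℝ) * c i := by
    simp [Real.logb_prod _ _ fun i _ ↦ pow_ne_zero _ (hp i).1.ne', c, Real.logb_pow]
  simp only [hlog, ← fragmentationMeasure_real_coe_image_Ioo c _ ha.le hb.le]
  exact tendsto_fragmentationMeasure_real_coe_image_Ioo hc ha.le hab.le hb.le
end
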